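/- Let ε ∈ (0, 1/2], m ≥ 1, and d ∈ [0, 1], and set t = tanh(ε/2). Let b₁, …, b_m be i.i.d. real random variables taking values in {0,1} with P(b_i = 1) = (1/2)(1 − t) + t·d, and let L be a Laplace(0, 1/(εm)) random variable independent of the b_i. Define the estimator d̃ = (1/t)·((1/m)·∑_{i=1}^m b_i − 1/2 + t/2) + L. Then E[d̃] = d and Var(d̃) = (1/(4m))·(1/t² − 1) + d(1 − d)/m + 2/(m²ε²) ≤ 1/(4m·tanh²(ε/2)) + 2/(m²ε²). That is, the Optimal Bernoulli density estimator is an unbiased estimate of the density d with the stated mean-squared-error bound. -/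

import Mathlib

open MeasureTheory ProbabilityTheory

/-- The density of the Laplace distribution with location `μ` and scale `b`. -/
noncomputable def laplacePdf (μ b x : ℝ) : ℝ :=
  (1 / (2 * b)) * Real.exp (-|x - μ| / b)

/-- The Laplace distribution with location `μ` and scale `b`, as a measure on ℝ. -/
noncomputable def laplaceMeasure (μ b : ℝ) : Measure ℝ :=
  volume.withDensity fun x => ENNReal.ofReal (laplacePdf μ b x)

/-! The estimator equals `a·S + c + L` with `S = ∑ bᵢ`, `a = 1/(tm)`, `c = (t - 1)/(2t)` and `L`
independent of `S`. Hence its mean is `a·m·p + c = d`, where `p = (1 - t)/2 + t·d`, and its mean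
squared error is its variance `a²·m·p(1 - p) + Var L`. Since `p(1 - p) = 1/4 - t²(d - 1/2)²` and
a Laplace(0, b) variable has variance `2b²` (a Gamma integral after folding at `0`), this is the
stated formula; the bound is `d(1 - d) ≤ 1/4`. -/

open Set Real
open scoped ENNReal

lemma tanh_pos_of_pos {x : ℝ} (hx : 0 < x) : 0 < tanh x := by
  rw [tanh_eq_sinh_div_cosh]
  exact div_pos (sinh_pos_iff.2 hx) (cosh_pos x)

lemma integrable_comp_abs_of_integrableOn_Ioi {E : Type*} [NormedAddCommGroup E] {f : ℝ → E}
    (hf : IntegrableOn (fun x => f |x|) (Ioi 0)) : Integrable (fun x => f |x|) := by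
  have h_Iic : IntegrableOn (fun x => f |x|) (Iic 0) := by
    have hneg : MeasurableEmbedding fun x : ℝ => -x := (Homeomorph.neg ℝ).measurableEmbedding
    rw [← Measure.map_neg_eq_self (volume : Measure ℝ), hneg.integrableOn_map_iff]
    simpa [Function.comp_def] using Iff.mpr integrableOn_Ici_iff_integrableOn_Ioi hf
  simpa [← integrableOn_univ] using h_Iic.union hf

lemma integrableOn_pow_mul_exp_neg_mul_Ioi (n : ℕ) {r : ℝ} (hr : 0 < r) :
    IntegrableOn (fun x : ℝ => x ^ n * exp (-(r * x))) (Ioi 0) := by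
  refine (integrableOn_rpow_mul_exp_neg_mul_rpow (s := n) (neg_one_lt_zero.trans_le n.cast_nonneg)
    one_pos hr).congr_fun (fun x _ => ?_) measurableSet_Ioi
  simp [rpow_natCast]

lemma integral_pow_mul_exp_neg_mul_Ioi (n : ℕ) {r : ℝ} (hr : 0 < r) :
    ∫ x in Ioi (0 : ℝ), x ^ n * exp (-(r * x)) = n.factorial / r ^ (n + 1) := by
  have h := integral_rpow_mul_exp_neg_mul_Ioi (a := n + 1) (by positivity) hr
  rw [add_sub_cancel_right, Gamma_nat_eq_factorial, ← Nat.cast_succ, rpow_natCast] at h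
  simp_rw [rpow_natCast] at h
  rw [h, div_pow, one_pow, one_div_mul_eq_div]

lemma laplacePdf_zero (b x : ℝ) : laplacePdf 0 b x = (2 * b)⁻¹ * exp (-(b⁻¹ * |x|)) := by
  rw [laplacePdf, sub_zero, one_div, neg_div, div_eq_inv_mul]

lemma measurable_laplacePdf (μ b : ℝ) : Measurable (laplacePdf μ b) := by
  unfold laplacePdf; fun_prop

lemma laplacePdf_nonneg (μ : ℝ) {b : ℝ} (hb : 0 < b) (x : ℝ) : 0 ≤ laplacePdf μ b x := by
  unfold laplacePdf; positivity

lemma integrable_laplacePdf_zero_mul_pow {b : ℝ} (hb : 0 < b) (n : ℕ) :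
    Integrable (fun x => laplacePdf 0 b x * x ^ n) := by
  have h := (integrable_comp_abs_of_integrableOn_Ioi
    ((integrableOn_pow_mul_exp_neg_mul_Ioi n (inv_pos.2 hb)).congr_fun
      (fun x hx => by rw [abs_of_pos hx]) measurableSet_Ioi)).const_mul (2 * b)⁻¹
  refine h.mono'
    ((measurable_laplacePdf 0 b).mul (measurable_id.pow_const n)).aestronglyMeasurable
    (ae_of_all _ fun x => le_of_eq ?_)
  rw [norm_mul, norm_pow, Real.norm_of_nonneg (laplacePdf_nonneg 0 hb x), laplacePdf_zero,
    Real.norm_eq_abs]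
  ring

lemma integral_laplacePdf_zero_mul_id (b : ℝ) : ∫ x, laplacePdf 0 b x * x = 0 := by
  have h := integral_neg_eq_self (fun x => laplacePdf 0 b x * x) volume
  simp only [laplacePdf_zero, abs_neg, mul_neg, integral_neg] at h
  simp only [laplacePdf_zero]
  linarith

lemma integral_laplacePdf_zero_mul_sq {b : ℝ} (hb : 0 < b) :
    ∫ x, laplacePdf 0 b x * x ^ 2 = 2 * b ^ 2 := by
  have h : ∀ x, laplacePdf 0 b x * x ^ 2 = (2 * b)⁻¹ * (|x| ^ 2 * exp (-(b⁻¹ * |x|))) := by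
    intro x; rw [laplacePdf_zero, sq_abs]; ring
  simp_rw [h]
  rw [integral_comp_abs (f := fun u => (2 * b)⁻¹ * (u ^ 2 * exp (-(b⁻¹ * u)))),
    integral_const_mul, integral_pow_mul_exp_neg_mul_Ioi 2 (inv_pos.2 hb)]
  norm_num [Nat.factorial]
  field_simp

section LaplaceMeasure

variable {b : ℝ}

lemma integrable_laplaceMeasure_iff (μ : ℝ) (hb : 0 < b) {g : ℝ → ℝ} :
    Integrable g (laplaceMeasure μ b) ↔ Integrable fun x => laplacePdf μ b x * g x := by
  rw [laplaceMeasure, integrable_withDensity_iff_integrable_smul'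
    (measurable_laplacePdf μ b).ennreal_ofReal (ae_of_all _ fun _ => ENNReal.ofReal_lt_top)]
  simp_rw [ENNReal.toReal_ofReal (laplacePdf_nonneg μ hb _), smul_eq_mul]

lemma integral_laplaceMeasure (μ : ℝ) (hb : 0 < b) (g : ℝ → ℝ) :
    ∫ x, g x ∂laplaceMeasure μ b = ∫ x, laplacePdf μ b x * g x := by
  rw [laplaceMeasure, integral_withDensity_eq_integral_toReal_smul
    (measurable_laplacePdf μ b).ennreal_ofReal (ae_of_all _ fun _ => ENNReal.ofReal_lt_top)]
  simp_rw [ENNReal.toReal_ofReal (laplacePdf_nonneg μ hb _), smul_eq_mul]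

lemma memLp_two_id_laplaceMeasure (hb : 0 < b) : MemLp id 2 (laplaceMeasure 0 b) :=
  (memLp_two_iff_integrable_sq aestronglyMeasurable_id).2
    ((integrable_laplaceMeasure_iff 0 hb).2 (integrable_laplacePdf_zero_mul_pow hb 2))

lemma integral_id_laplaceMeasure (hb : 0 < b) : ∫ x, x ∂laplaceMeasure 0 b = 0 := by
  rw [integral_laplaceMeasure 0 hb, integral_laplacePdf_zero_mul_id]

lemma variance_id_laplaceMeasure (hb : 0 < b) : Var[id; laplaceMeasure 0 b] = 2 * b ^ 2 := by
  rw [variance_eq_integral aemeasurable_id]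
  simp only [id, integral_id_laplaceMeasure hb, sub_zero]
  rw [integral_laplaceMeasure 0 hb, integral_laplacePdf_zero_mul_sq hb]

variable {Ω : Type*} [MeasurableSpace Ω] {P : Measure Ω} {L : Ω → ℝ}

lemma memLp_two_of_map_eq_laplaceMeasure (hb : 0 < b) (hL : Measurable L)
    (hlaw : P.map L = laplaceMeasure 0 b) : MemLp L 2 P :=
  (memLp_map_measure_iff aestronglyMeasurable_id hL.aemeasurable).1
    (hlaw ▸ memLp_two_id_laplaceMeasure hb)

lemma integral_eq_zero_of_map_eq_laplaceMeasure (hb : 0 < b) (hL : Measurable L)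
    (hlaw : P.map L = laplaceMeasure 0 b) : P[L] = 0 := by
  rw [← integral_id_laplaceMeasure hb, ← hlaw]
  exact (integral_map hL.aemeasurable aestronglyMeasurable_id).symm

lemma variance_eq_of_map_eq_laplaceMeasure (hb : 0 < b) (hL : Measurable L)
    (hlaw : P.map L = laplaceMeasure 0 b) : Var[L; P] = 2 * b ^ 2 := by
  rw [← variance_id_laplaceMeasure hb, ← hlaw, variance_id_map hL.aemeasurable]

end LaplaceMeasure

section ZeroOne

variable {Ω : Type*} [MeasurableSpace Ω] {μ : Measure Ω}

lemma integral_eq_measureReal_of_zero_one {X : Ω → ℝ} (hX : Measurable X)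
    (h01 : ∀ ω, X ω = 0 ∨ X ω = 1) : μ[X] = μ.real {ω | X ω = 1} := by
  have hind : X = {ω | X ω = 1}.indicator 1 := by
    funext ω; rcases h01 ω with h | h <;> simp [h]
  conv_lhs => rw [hind]
  exact integral_indicator_one (hX (measurableSet_singleton 1))

lemma memLp_of_zero_one [IsFiniteMeasure μ] {X : Ω → ℝ} (hX : Measurable X)
    (h01 : ∀ ω, X ω = 0 ∨ X ω = 1) (p : ℝ≥0∞) : MemLp X p μ :=
  MemLp.of_bound hX.aestronglyMeasurable 1
    (ae_of_all _ fun ω => by rcases h01 ω with h | h <;> simp [h])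

lemma variance_eq_of_zero_one [IsProbabilityMeasure μ] {X : Ω → ℝ} (hX : Measurable X)
    (h01 : ∀ ω, X ω = 0 ∨ X ω = 1) : Var[X; μ] = μ[X] * (1 - μ[X]) := by
  have hsq : X ^ 2 = X := by
    funext ω; rcases h01 ω with h | h <;> simp [h]
  rw [variance_eq_sub (memLp_of_zero_one hX h01 2), hsq]
  ring

lemma integral_sum_of_zero_one [IsFiniteMeasure μ] {ι : Type*} [Fintype ι]
    {X : ι → Ω → ℝ} {p : ℝ} (hX : ∀ i, Measurable (X i))
    (h01 : ∀ i ω, X i ω = 0 ∨ X i ω = 1)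
    (hmean : ∀ i, μ[X i] = p) : μ[∑ i, X i] = Fintype.card ι * p := by
  simp [integral_finsetSum _ fun i _ => (memLp_of_zero_one (hX i) (h01 i) 1).integrable le_rfl,
    hmean]

lemma variance_sum_of_zero_one [IsProbabilityMeasure μ] {ι : Type*} [Fintype ι]
    {X : ι → Ω → ℝ} {p : ℝ} (hX : ∀ i, Measurable (X i))
    (h01 : ∀ i ω, X i ω = 0 ∨ X i ω = 1)
    (hmean : ∀ i, μ[X i] = p) (hindep : Pairwise fun i j => IndepFun (X i) (X j) μ) :
    Var[∑ i, X i; μ] = Fintype.card ι * (p * (1 - p)) := by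
  rw [IndepFun.variance_sum (fun i _ => memLp_of_zero_one (hX i) (h01 i) 2)
    (fun i _ j _ hij => hindep hij)]
  simp [variance_eq_of_zero_one (hX _) (h01 _), hmean]

end ZeroOne

lemma indepFun_sum_of_iIndepFun_option_elim {Ω ι : Type*} [MeasurableSpace Ω]
    {P : Measure Ω} [Fintype ι] {L : Ω → ℝ} {B : ι → Ω → ℝ} (hL : Measurable L)
    (hB : ∀ i, Measurable (B i))
    (hindep : iIndepFun (fun o : Option ι => o.elim L B) P) : IndepFun (∑ i, B i) L P := by
  have hmeas : ∀ o : Option ι, Measurable (o.elim L B) := by rintro (_ | i) <;> simp [*]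
  simpa [Finset.sum_map] using hindep.indepFun_finsetSum_of_notMem hmeas
    (s := Finset.univ.map Function.Embedding.some) (i := none) (by simp)

section Affine

variable {Ω : Type*} [MeasurableSpace Ω] {P : Measure Ω} [IsProbabilityMeasure P]
  {S L : Ω → ℝ}

lemma integral_affine_add (hS : Integrable S P) (hL : Integrable L P) (a c : ℝ) :
    ∫ ω, a * S ω + c + L ω ∂P = a * P[S] + c + P[L] := by
  rw [integral_add (f := fun ω => a * S ω + c) ((hS.const_mul a).add (integrable_const c)) hL,
    integral_add (hS.const_mul a) (integrable_const c), integral_const_mul, integral_const,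
    probReal_univ, one_smul]

lemma variance_affine_add_of_indepFun (hS : MemLp S 2 P) (hL : MemLp L 2 P)
    (hSL : IndepFun S L P) (a c : ℝ) :
    Var[fun ω => a * S ω + c + L ω; P] = a ^ 2 * Var[S; P] + Var[L; P] := by
  have hX : MemLp (fun ω => a * S ω + c) 2 P := (hS.const_mul a).add (memLp_const c)
  have hXL : IndepFun (fun ω => a * S ω + c) L P :=
    hSL.comp (φ := fun x => a * x + c) (by fun_prop) measurable_id
  rw [hXL.variance_fun_add hX hL, variance_add_const (hS.const_mul a).aestronglyMeasurable,
    variance_const_mul]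

lemma integral_sq_affine_add_sub_of_indepFun (hS : MemLp S 2 P) (hL : MemLp L 2 P)
    (hSL : IndepFun S L P) {a c d : ℝ} (hd : a * P[S] + c + P[L] = d) :
    ∫ ω, (a * S ω + c + L ω - d) ^ 2 ∂P = a ^ 2 * Var[S; P] + Var[L; P] := by
  have hSm := hS.aemeasurable
  have hLm := hL.aemeasurable
  rw [← variance_affine_add_of_indepFun hS hL hSL a c, variance_eq_integral (by fun_prop),
    integral_affine_add (hS.integrable one_le_two) (hL.integrable one_le_two), hd]

end Affine

theorem optimal_bernoulli_density_estimator_moments_general {Ω : Type*} [MeasureSpace Ω]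
    [IsProbabilityMeasure (ℙ : Measure Ω)] (ε : ℝ) (hε0 : 0 < ε)
    (m : ℕ) (hm : 1 ≤ m) (d : ℝ) (hd0 : 0 ≤ d)
    (t : ℝ) (ht : t = Real.tanh (ε / 2))
    (B : Fin m → Ω → ℝ) (hBmeas : ∀ i, Measurable (B i))
    (hBval : ∀ i ω, B i ω = 0 ∨ B i ω = 1)
    (hB1 : ∀ i, ℙ {ω | B i ω = 1} = ENNReal.ofReal ((1 / 2) * (1 - t) + t * d))
    (L : Ω → ℝ) (hLmeas : Measurable L)
    (hLlaw : Measure.map L ℙ = laplaceMeasure 0 (1 / (ε * m)))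
    (hindep : iIndepFun
      (fun o : Option (Fin m) => o.elim L B) ℙ) :
    (∫ ω, (1 / t) * ((1 / m) * ∑ i, B i ω - 1 / 2 + t / 2) + L ω ∂ℙ) = d ∧
    (∫ ω, ((1 / t) * ((1 / m) * ∑ i, B i ω - 1 / 2 + t / 2) + L ω - d) ^ 2 ∂ℙ) =
      (1 / (4 * m)) * (1 / t ^ 2 - 1) + d * (1 - d) / m + 2 / ((m : ℝ) ^ 2 * ε ^ 2) ∧
    (1 / (4 * m)) * (1 / t ^ 2 - 1) + d * (1 - d) / m + 2 / ((m : ℝ) ^ 2 * ε ^ 2) ≤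
      1 / (4 * m * Real.tanh (ε / 2) ^ 2) + 2 / ((m : ℝ) ^ 2 * ε ^ 2) := by
  have hm0 : (0 : ℝ) < m := by exact_mod_cast hm
  have ht0 : 0 < t := ht ▸ tanh_pos_of_pos (half_pos hε0)
  have hb : 0 < 1 / (ε * m) := by positivity
  set p := 1 / 2 * (1 - t) + t * d
  have hEB : ∀ i, ℙ[B i] = p := fun i => by
    have : t < 1 := ht ▸ tanh_lt_one _
    rw [integral_eq_measureReal_of_zero_one (hBmeas i) (hBval i), measureReal_def, hB1,
      ENNReal.toReal_ofReal (by positivity)]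
  set S := ∑ i, B i
  have hSLp : MemLp S 2 ℙ :=
    memLp_finsetSum' _ fun i _ => memLp_of_zero_one (hBmeas i) (hBval i) 2
  have hES : ℙ[S] = m * p := (integral_sum_of_zero_one hBmeas hBval hEB).trans (by simp)
  have hVarS : Var[S; ℙ] = m * (p * (1 - p)) := by
    simpa using variance_sum_of_zero_one hBmeas hBval hEB
      fun i j hij => hindep.indepFun (Option.some_injective _ |>.ne hij)
  have hSL := indepFun_sum_of_iIndepFun_option_elim hLmeas hBmeas hindep
  have hLLp := memLp_two_of_map_eq_laplaceMeasure hb hLmeas hLlaw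
  have hestimator : ∀ ω, (1 / t) * ((1 / m) * ∑ i, B i ω - 1 / 2 + t / 2) + L ω =
      1 / (t * m) * S ω + (t - 1) / (2 * t) + L ω := fun ω => by
    simp only [S, Finset.sum_apply]; field_simp; ring
  have hmean : 1 / (t * m) * ℙ[S] + (t - 1) / (2 * t) + ℙ[L] = d := by
    rw [hES, integral_eq_zero_of_map_eq_laplaceMeasure hb hLmeas hLlaw]
    field_simp
    ring
  simp_rw [hestimator]
  refine ⟨(integral_affine_add (hSLp.integrable one_le_two) (hLLp.integrable one_le_two) _ _
    ).trans hmean, ?_, ?_⟩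
  · rw [integral_sq_affine_add_sub_of_indepFun hSLp hLLp hSL hmean, hVarS,
      variance_eq_of_map_eq_laplaceMeasure hb hLmeas hLlaw]
    field_simp
    ring
  · have hgap : 1 / (4 * m * t ^ 2) - (1 / (4 * m) * (1 / t ^ 2 - 1) + d * (1 - d) / m) =
        (d - 1 / 2) ^ 2 / m := by
      field_simp; ring
    rw [← ht]
    linarith [div_nonneg (sq_nonneg (d - 1 / 2)) hm0.le]

/-- The Optimal Bernoulli density estimator
`d̃ = (1/t)·((1/m)·∑ᵢ bᵢ − 1/2 + t/2) + L`, with `t = tanh(ε/2)`, the `bᵢ` i.i.d.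
`Bernoulli((1/2)(1 − t) + t·d)`, and `L ~ Laplace(0, 1/(εm))` independent, is an unbiased
estimate of `d` with variance
`(1/(4m))·(1/t² − 1) + d(1 − d)/m + 2/(m²ε²) ≤ 1/(4m·tanh²(ε/2)) + 2/(m²ε²)`. -/
theorem optimal_bernoulli_density_estimator_moments {Ω : Type*} [MeasureSpace Ω]
    [IsProbabilityMeasure (ℙ : Measure Ω)] (ε : ℝ) (hε0 : 0 < ε) (hε : ε ≤ 1 / 2)
    (m : ℕ) (hm : 1 ≤ m) (d : ℝ) (hd0 : 0 ≤ d) (hd1 : d ≤ 1)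
    (t : ℝ) (ht : t = Real.tanh (ε / 2))
    (B : Fin m → Ω → ℝ) (hBmeas : ∀ i, Measurable (B i))
    (hBval : ∀ i ω, B i ω = 0 ∨ B i ω = 1)
    (hB1 : ∀ i, ℙ {ω | B i ω = 1} = ENNReal.ofReal ((1 / 2) * (1 - t) + t * d))
    (L : Ω → ℝ) (hLmeas : Measurable L)
    (hLlaw : Measure.map L ℙ = laplaceMeasure 0 (1 / (ε * m)))
    (hindep : iIndepFun
      (fun o : Option (Fin m) => o.elim L B) ℙ) :
    (∫ ω, (1 / t) * ((1 / m) * ∑ i, B i ω - 1 / 2 + t / 2) + L ω ∂ℙ) = d ∧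
    (∫ ω, ((1 / t) * ((1 / m) * ∑ i, B i ω - 1 / 2 + t / 2) + L ω - d) ^ 2 ∂ℙ) =
      (1 / (4 * m)) * (1 / t ^ 2 - 1) + d * (1 - d) / m + 2 / ((m : ℝ) ^ 2 * ε ^ 2) ∧
    (1 / (4 * m)) * (1 / t ^ 2 - 1) + d * (1 - d) / m + 2 / ((m : ℝ) ^ 2 * ε ^ 2) ≤
      1 / (4 * m * Real.tanh (ε / 2) ^ 2) + 2 / ((m : ℝ) ^ 2 * ε ^ 2) :=
  optimal_bernoulli_density_estimator_moments_general ε hε0 m hm d hd0 t ht B hBmeas hBval hB1 L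
    hLmeas hLlaw hindep
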